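/- arXiv:2306.07459 — 5 statements merged into one kernel-verified Lean document; each statement's English description precedes it below -/
import Mathlib

section
/- For all positive integers n, the number of divisors of n satisfies τ(n) ≤ 576·(n/21621600)^{1/4}, and in particular τ(n) ≤ 9·n^{1/4}. -/
open Real

private def Afun : ℕ → ℕ := fun p =>
  if p = 2 then 32 else if p = 3 then 27 else if p = 5 then 25
  else if p = 7 then 7 else if p = 11 then 11 else if p = 13 then 13 else 1

private def Bfun : ℕ → ℕ := fun p =>
  if p = 2 then 1296 else if p = 3 then 256 else if p = 5 then 81
  else if p = 7 then 16 else if p = 11 then 16 else if p = 13 then 16 else 1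

lemma local_bound (p : ℕ) (hp : p.Prime) : ∀ e : ℕ, Afun p * (e+1)^4 ≤ Bfun p * p^e := by
  have h2 : 2 ≤ p := hp.two_le
  have base : ∀ e ≤ 5, Afun p * (e+1)^4 ≤ Bfun p * p^e := by
    intro e he
    by_cases h17 : p < 17
    · interval_cases p <;> first
        | (exfalso; revert hp; decide)
        | (interval_cases e <;> decide)
    · have hA : Afun p = 1 := by
        simp only [Afun]
        repeat rw [if_neg (by omega)]
      have hB : Bfun p = 1 := by
        simp only [Bfun]
        repeat rw [if_neg (by omega)]
      rw [hA, hB, one_mul, one_mul]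
      have h17' : 17 ^ e ≤ p ^ e := Nat.pow_le_pow_left (by omega) e
      refine le_trans ?_ h17'
      interval_cases e <;> decide
  intro e
  induction e with
  | zero => exact base 0 (by norm_num)
  | succ k ih =>
    rcases le_or_gt (k+1) 5 with h | h
    · exact base _ h
    · have hk : 5 ≤ k := by omega
      have e1 : 5*k^3 ≤ k*k^3 := Nat.mul_le_mul_right _ hk
      have e2 : 5*k^2 ≤ k*k^2 := Nat.mul_le_mul_right _ hk
      have e3 : 5*k ≤ k*k := Nat.mul_le_mul_right _ hk
      have h1 : (k+1+1)^4 ≤ 2 * (k+1)^4 := by nlinarith [e1, e2, e3, hk]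
      calc Afun p * (k+1+1)^4 ≤ Afun p * (2*(k+1)^4) := Nat.mul_le_mul_left _ h1
      _ = 2 * (Afun p * (k+1)^4) := by ring
      _ ≤ 2 * (Bfun p * p^k) := Nat.mul_le_mul_left _ ih
      _ ≤ p * (Bfun p * p^k) := Nat.mul_le_mul_right _ h2
      _ = Bfun p * p^(k+1) := by ring

lemma nat_bound (n : ℕ) (hn : 0 < n) :
    21621600 * (n.divisors.card)^4 ≤ 110075314176 * n := by
  classical
  set S := n.primeFactors with hS
  set T : Finset ℕ := {2,3,5,7,11,13} with hT
  set U := S ∪ T with hU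
  have hfac0 : ∀ p ∉ S, n.factorization p = 0 := by
    intro p hp
    rw [hS] at hp
    rwa [← Nat.support_factorization, Finsupp.notMem_support_iff] at hp
  have hτ : n.divisors.card = ∏ p ∈ U, (n.factorization p + 1) := by
    rw [Nat.card_divisors hn.ne']
    exact Finset.prod_subset Finset.subset_union_left (by
      intro x hx hx'
      simp [hfac0 x hx'])
  have hn' : n = ∏ p ∈ U, p ^ n.factorization p := by
    conv_lhs => rw [← Nat.factorization_prod_pow_eq_self hn.ne']
    rw [Nat.prod_factorization_eq_prod_primeFactors]
    exact Finset.prod_subset Finset.subset_union_left (by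
      intro x hx hx'
      simp [hfac0 x hx'])
  have hA : (21621600 : ℕ) = ∏ p ∈ U, Afun p := by
    have : ∏ p ∈ T, Afun p = ∏ p ∈ U, Afun p := by
      refine Finset.prod_subset Finset.subset_union_right ?_
      intro x _ hx
      simp only [hT, Finset.mem_insert, Finset.mem_singleton] at hx
      push_neg at hx
      simp [Afun, hx.1, hx.2.1, hx.2.2.1, hx.2.2.2.1, hx.2.2.2.2.1, hx.2.2.2.2.2]
    rw [← this]; decide
  have hB : (110075314176 : ℕ) = ∏ p ∈ U, Bfun p := by
    have : ∏ p ∈ T, Bfun p = ∏ p ∈ U, Bfun p := by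
      refine Finset.prod_subset Finset.subset_union_right ?_
      intro x _ hx
      simp only [hT, Finset.mem_insert, Finset.mem_singleton] at hx
      push_neg at hx
      simp [Bfun, hx.1, hx.2.1, hx.2.2.1, hx.2.2.2.1, hx.2.2.2.2.1, hx.2.2.2.2.2]
    rw [← this]; decide
  have hprime : ∀ p ∈ U, p.Prime := by
    intro p hp
    rcases Finset.mem_union.mp hp with h | h
    · exact Nat.prime_of_mem_primeFactors h
    · fin_cases h <;> norm_num
  calc 21621600 * (n.divisors.card)^4
      = (∏ p ∈ U, Afun p) * ∏ p ∈ U, (n.factorization p + 1)^4 := by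
        rw [hτ, ← Finset.prod_pow, hA]
    _ = ∏ p ∈ U, Afun p * (n.factorization p + 1)^4 := by rw [Finset.prod_mul_distrib]
    _ ≤ ∏ p ∈ U, Bfun p * p ^ n.factorization p := by
        refine Finset.prod_le_prod' ?_
        intro p hp
        exact local_bound p (hprime p hp) _
    _ = (∏ p ∈ U, Bfun p) * ∏ p ∈ U, p ^ n.factorization p := by rw [Finset.prod_mul_distrib]
    _ = 110075314176 * n := by rw [← hB, ← hn']

theorem divisor_count_bound (n : ℕ) (hn : 0 < n) :
    ((n.divisors.card : ℝ) ≤ 576 * ((n : ℝ) / 21621600) ^ ((1 : ℝ) / 4)) ∧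
    576 * ((n : ℝ) / 21621600) ^ ((1 : ℝ) / 4) ≤ 9 * (n : ℝ) ^ ((1 : ℝ) / 4) := by
  have hx : (0:ℝ) ≤ (n:ℝ)/21621600 := by positivity
  have hx4 : (((n:ℝ)/21621600) ^ ((1:ℝ)/4)) ^ (4:ℕ) = (n:ℝ)/21621600 := by
    rw [← Real.rpow_natCast (((n:ℝ)/21621600) ^ ((1:ℝ)/4)) 4, ← Real.rpow_mul hx]
    norm_num
  constructor
  · have hnat := nat_bound n hn
    have hreal : ((n.divisors.card : ℝ))^(4:ℕ) ≤ (576 * ((n:ℝ)/21621600) ^ ((1:ℝ)/4))^(4:ℕ) := by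
      rw [mul_pow, hx4]
      have : (21621600:ℝ) * ((n.divisors.card : ℝ))^(4:ℕ) ≤ 110075314176 * (n:ℝ) := by
        exact_mod_cast hnat
      rw [div_eq_mul_inv]
      nlinarith [this]
    have hb : (0:ℝ) ≤ 576 * ((n:ℝ)/21621600) ^ ((1:ℝ)/4) := by positivity
    exact (pow_le_pow_iff_left₀ (by positivity) hb (by norm_num : (4:ℕ) ≠ 0)).mp hreal
  · have hc : (64:ℝ) ≤ (21621600:ℝ) ^ ((1:ℝ)/4) := by
      have h1 : (((64:ℝ)^(4:ℕ)) : ℝ) ^ ((1:ℝ)/4) = 64 := by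
        rw [← Real.rpow_natCast (64:ℝ) 4, ← Real.rpow_mul (by norm_num)]
        norm_num
      calc (64:ℝ) = ((64:ℝ)^(4:ℕ)) ^ ((1:ℝ)/4) := h1.symm
      _ ≤ (21621600:ℝ) ^ ((1:ℝ)/4) := Real.rpow_le_rpow (by positivity) (by norm_num) (by norm_num)
    rw [Real.div_rpow (by positivity) (by norm_num)]
    have hc0 : (0:ℝ) < (21621600:ℝ) ^ ((1:ℝ)/4) := by positivity
    have hn4 : (0:ℝ) ≤ (n:ℝ) ^ ((1:ℝ)/4) := by positivity
    rw [mul_div_assoc', div_le_iff₀ hc0]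
    nlinarith [hc, hn4]
end

section
/- Let k ∈ ℕ with k ≥ 1 and ν ∈ ℕ with 0 ≤ ν ≤ k, and set a = (π/k)(ν − 1/6). Let b ≥ 0 and define f(x) = 4·cos(a)·cosh(bx)/(cos(2a) + cosh(2bx)). Then |f| is monotonically decreasing on [0,1]. -/
/-! Writing `t = b x`, the identities `cos 2a = 1 - 2 sin² a` and `cosh 2t = 2 cosh² t - 1` give
`f(x) = 2 cos a · g(cosh t)` with `g u = u / (u² - sin² a)`. Since `cosh (b x)` increases in `x ≥ 0`
and stays `≥ 1 > |sin a|` unless `cos a = 0` (when `f ≡ 0`), it suffices that `g` decreases on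
`(|sin a|, ∞)`, which is a cross-multiplication. -/

open Real Set

lemma antitoneOn_div_sq_sub_sq (r : ℝ) :
    AntitoneOn (fun u : ℝ => u / (u ^ 2 - r ^ 2)) (Ioi |r|) := by
  intro u hu v hv huv
  have hru : r ^ 2 < u ^ 2 := sq_lt_sq.2 (hu.trans_le (le_abs_self u))
  have hrv : r ^ 2 < v ^ 2 := sq_lt_sq.2 (hv.trans_le (le_abs_self v))
  have hu0 : 0 < u := (abs_nonneg r).trans_lt hu
  rw [div_le_div_iff₀ (sub_pos.2 hrv) (sub_pos.2 hru)]
  nlinarith [mul_nonneg (sub_nonneg.2 huv) (add_nonneg (mul_pos hu0 (hu0.trans_le huv)).le (sq_nonneg r))]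

lemma monotoneOn_cosh_mul (b : ℝ) : MonotoneOn (fun x => cosh (b * x)) (Ici 0) := by
  intro x hx y hy hxy
  simp only [cosh_le_cosh, abs_mul, abs_of_nonneg (mem_Ici.1 hx), abs_of_nonneg (mem_Ici.1 hy)]
  exact mul_le_mul_of_nonneg_left hxy (abs_nonneg b)

lemma cos_two_mul_add_cosh_two_mul (a t : ℝ) :
    cos (2 * a) + cosh (2 * t) = 2 * (cosh t ^ 2 - sin a ^ 2) := by
  rw [cos_two_mul_eq_one_sub, cosh_two_mul, cosh_sq]
  ring

lemma abs_sin_lt_one_of_cos_ne_zero {a : ℝ} (h : cos a ≠ 0) : |sin a| < 1 := by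
  rw [← sq_lt_one_iff_abs_lt_one, sin_sq, sub_lt_self_iff]
  positivity

lemma abs_four_cos_mul_cosh_div_eq {a t : ℝ} (h : |sin a| < cosh t) :
    |4 * cos a * cosh t / (cos (2 * a) + cosh (2 * t))|
      = 2 * |cos a| * (cosh t / (cosh t ^ 2 - sin a ^ 2)) := by
  have hden : 0 < cosh t ^ 2 - sin a ^ 2 :=
    sub_pos.2 (sq_lt_sq.2 (h.trans_le (le_abs_self _)))
  rw [cos_two_mul_add_cosh_two_mul, abs_div, abs_mul, abs_mul, abs_of_pos (cosh_pos t),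
    abs_of_pos (by positivity : (0 : ℝ) < 2 * (cosh t ^ 2 - sin a ^ 2))]
  field_simp
  ring

theorem antitoneOn_abs_cos_mul_cosh_div (a b : ℝ) :
    AntitoneOn (fun x : ℝ =>
        |4 * cos a * cosh (b * x) / (cos (2 * a) + cosh (2 * b * x))|) (Ici 0) := by
  rcases eq_or_ne (cos a) 0 with hc | hc
  · simpa [hc] using antitoneOn_const
  have hmem : ∀ x, cosh (b * x) ∈ Ioi |sin a| := fun x =>
    (abs_sin_lt_one_of_cos_ne_zero hc).trans_le (one_le_cosh _)
  intro x hx y hy hxy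
  dsimp only
  rw [mul_assoc 2 b, mul_assoc 2 b, abs_four_cos_mul_cosh_div_eq (hmem x),
    abs_four_cos_mul_cosh_div_eq (hmem y)]
  exact mul_le_mul_of_nonneg_left
    (antitoneOn_div_sq_sub_sq (sin a) (hmem x) (hmem y) (monotoneOn_cosh_mul b hx hy hxy))
    (by positivity)

theorem abs_f_antitoneOn_general (k : ℕ) (ν : ℕ) (b : ℝ) :
    AntitoneOn (fun x : ℝ =>
        |4 * Real.cos (Real.pi / k * (ν - 1 / 6)) * Real.cosh (b * x) /
          (Real.cos (2 * (Real.pi / k * (ν - 1 / 6))) + Real.cosh (2 * b * x))|)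
      (Set.Icc (0 : ℝ) 1) :=
  (antitoneOn_abs_cos_mul_cosh_div _ b).mono Icc_subset_Ici_self

theorem abs_f_antitoneOn (k : ℕ) (hk : 1 ≤ k) (ν : ℕ) (hν : ν ≤ k) (b : ℝ) (hb : 0 ≤ b) :
    AntitoneOn (fun x : ℝ =>
        |4 * Real.cos (Real.pi / k * (ν - 1 / 6)) * Real.cosh (b * x) /
          (Real.cos (2 * (Real.pi / k * (ν - 1 / 6))) + Real.cosh (2 * b * x))|)
      (Set.Icc (0 : ℝ) 1) :=
  abs_f_antitoneOn_general k ν b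
end

section
/- For every integer k ≥ 2, Σ_{ν=1}^{k} |1/cos((π/k)(ν − 1/6))| ≤ 8·k·log(k). -/
/-!
The angle `θ_ν = (π/k)(ν - 1/6)` lies in `[0, π]` and `π/2 - θ_ν = π (3k + 1 - 6ν) / (6k)`, so
Jordan's inequality `|cos θ| ≥ (2/π) |π/2 - θ|` bounds the `ν`-th summand by `3k / |6ν - 3k - 1|`.
The integers `|6ν - 3k - 1|` are positive and pairwise distinct (they avoid `0 mod 3` and cannot be
negatives of each other modulo `6`), so the sum of their reciprocals is at most the harmonic number
`H_k ≤ 1 + log k`. Finally `3k (1 + log k) ≤ 8k log k` because `log k ≥ log 2 > 3/5`.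
-/

open Real Finset

theorem sum_inv_le_harmonic_card (S : Finset ℕ) (hS : 0 ∉ S) :
    ∑ i ∈ S, (i : ℝ)⁻¹ ≤ harmonic #S := by
  induction S using Finset.induction_on_max with
  | empty => simp
  | insert a s hlt ih =>
    have ha : a ∉ s := fun h => (hlt a h).false
    have hs0 : 0 ∉ s := fun h => hS (mem_insert_of_mem h)
    have hcard : #s + 1 ≤ a := by
      have hsub : s ⊆ Ioo 0 a := fun x hx =>
        mem_Ioo.2 ⟨Nat.pos_of_ne_zero (by rintro rfl; exact hs0 hx), hlt x hx⟩
      have := card_le_card hsub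
      have : a ≠ 0 := by rintro rfl; exact hS (mem_insert_self 0 s)
      simp only [Nat.card_Ioo] at *
      omega
    have hinv : (a : ℝ)⁻¹ ≤ ((#s + 1 : ℕ) : ℝ)⁻¹ :=
      inv_anti₀ (by positivity) (by exact_mod_cast hcard)
    rw [sum_insert ha, card_insert_of_notMem ha, harmonic_succ]
    push_cast at hinv ⊢
    linarith [ih hs0]

theorem two_div_pi_mul_abs_pi_div_two_sub_le_abs_cos {θ : ℝ} (h₀ : 0 ≤ θ) (hπ : θ ≤ π) :
    2 / π * |π / 2 - θ| ≤ |cos θ| := by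
  rw [← sin_pi_div_two_sub]
  exact mul_abs_le_abs_sin (abs_le.2 ⟨by linarith, by linarith⟩)

/-- `6k · |π/2 - (π/k)(ν - 1/6)| / π`, the distance of the `ν`-th angle to the pole of `sec`. -/
def secIndex (k ν : ℕ) : ℕ := ((6 * ν : ℤ) - (3 * k + 1)).natAbs

theorem cast_secIndex (k ν : ℕ) : (secIndex k ν : ℝ) = |6 * (ν : ℝ) - (3 * k + 1)| := by
  rw [secIndex, Nat.cast_natAbs]
  push_cast
  rfl

theorem secIndex_ne_zero (k ν : ℕ) : secIndex k ν ≠ 0 := by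
  unfold secIndex
  omega

theorem secIndex_injective (k : ℕ) : Function.Injective (secIndex k) := by
  intro ν μ h
  unfold secIndex at h
  omega

theorem abs_one_div_cos_le {k ν : ℕ} (hν : 1 ≤ ν) (hνk : ν ≤ k) :
    |1 / cos (π / k * (ν - 1 / 6))| ≤ 3 * k / secIndex k ν := by
  set θ := π / k * (ν - 1 / 6)
  have hν' : (1 : ℝ) ≤ ν := by exact_mod_cast hν
  have hνk' : (ν : ℝ) ≤ k := by exact_mod_cast hνk
  have hk : (0 : ℝ) < k := by linarith
  have hs : (0 : ℝ) < secIndex k ν := by exact_mod_cast Nat.pos_of_ne_zero (secIndex_ne_zero k ν)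
  have hθ₀ : 0 ≤ θ := mul_nonneg (by positivity) (by linarith)
  have hθπ : θ ≤ π := by
    have : (ν - 1 / 6 : ℝ) / k ≤ 1 := (div_le_one hk).2 (by linarith)
    calc θ = (ν - 1 / 6 : ℝ) / k * π := by ring
      _ ≤ 1 * π := by gcongr
      _ = π := one_mul π
  have hdist : 2 / π * |π / 2 - θ| = secIndex k ν / (3 * k) := by
    have : π / 2 - θ = π / (6 * k) * -(6 * ν - (3 * k + 1)) := by
      simp only [θ]
      field_simp
      ring
    rw [this, abs_mul, abs_neg, ← cast_secIndex, abs_of_pos (by positivity)]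
    field_simp
    ring
  have hcos := two_div_pi_mul_abs_pi_div_two_sub_le_abs_cos hθ₀ hθπ
  rw [hdist] at hcos
  calc |1 / cos θ| = 1 / |cos θ| := by rw [abs_div, abs_one]
    _ ≤ 1 / (secIndex k ν / (3 * k)) := one_div_le_one_div_of_le (by positivity) hcos
    _ = 3 * k / secIndex k ν := one_div_div _ _

theorem sum_inv_secIndex_le_harmonic (k : ℕ) :
    ∑ ν ∈ Icc 1 k, (secIndex k ν : ℝ)⁻¹ ≤ harmonic k := by
  have hS : 0 ∉ (Icc 1 k).image (secIndex k) := by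
    simpa only [mem_image, not_exists, not_and] using fun ν _ => secIndex_ne_zero k ν
  have := sum_inv_le_harmonic_card _ hS
  rwa [sum_image (secIndex_injective k).injOn, card_image_of_injective _ (secIndex_injective k),
    Nat.card_Icc, Nat.add_sub_cancel] at this

theorem sum_sec_bound (k : ℕ) (hk : 2 ≤ k) :
    ∑ ν ∈ Finset.Icc 1 k, |1 / Real.cos (Real.pi / k * (ν - 1 / 6))| ≤
      8 * k * Real.log k := by
  have hk' : (2 : ℝ) ≤ k := by exact_mod_cast hk
  have hlog : 3 / 5 < log k :=
    (log_two_gt_d9.trans_le' (by norm_num)).trans_le (log_le_log (by norm_num) hk')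
  calc ∑ ν ∈ Icc 1 k, |1 / cos (π / k * (ν - 1 / 6))|
      ≤ ∑ ν ∈ Icc 1 k, 3 * k * (secIndex k ν : ℝ)⁻¹ :=
        sum_le_sum fun ν hν => (abs_one_div_cos_le (mem_Icc.1 hν).1 (mem_Icc.1 hν).2).trans_eq
          (div_eq_mul_inv _ _)
    _ = 3 * k * ∑ ν ∈ Icc 1 k, (secIndex k ν : ℝ)⁻¹ := by rw [mul_sum]
    _ ≤ 3 * k * (1 + log k) := by
        gcongr
        exact (sum_inv_secIndex_le_harmonic k).trans (harmonic_le_one_add_log k)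
    _ ≤ 8 * k * log k := by nlinarith
end

section
/- Let 0 ≤ r ≤ 1. Then inf over |z| = r of |cos(π/3) + cosh(2π√(1/54)·√(1−(1−z²)²))| equals cos(π/3) + cos((2π/√54)·√((1/2)(√(4r⁴+4r⁶+r⁸) + 2r² + r⁴))). In particular this infimum is strictly positive for 0 ≤ r < 1. -/
/-!
Put `c = 2π/√54`, `w = 1 - (1 - z²)² = z² (2 - z²)` and `t = 2r² + r⁴`, so that `|w| ≤ t` on
`|z| = r`, and `ζ = c √w` has `|ζ| ≤ c √t ≤ π/2` for `r ≤ 1`. Since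
`Re (cosh ζ) = cosh (Re ζ) cos (Im ζ)` with `|Im ζ| ≤ |ζ|`, we get
`|cos (π/3) + cosh ζ| ≥ 1/2 + cos (c √t) > 0`. At `z = i r` we have `w = -t`, so `ζ = i c √t`
and equality holds. Finally `4r⁴ + 4r⁶ + r⁸ = t²`, so the closed form is `1/2 + cos (c √t)`.
-/

open Complex Real

namespace Complex

lemma cosh_re (z : ℂ) : (cosh z).re = Real.cosh z.re * Real.cos z.im := by
  simp only [cosh, exp_re, neg_re, neg_im, Real.cos_neg, div_ofNat_re, add_re, Real.cosh_eq]
  ring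

lemma ofReal_neg_cpow_half {t : ℝ} (ht : 0 ≤ t) : (-(t : ℂ)) ^ ((1 : ℂ) / 2) = √t * I := by
  rw [← ofReal_neg, ofReal_cpow_of_nonpos (neg_nonpos.mpr ht), ofReal_neg, neg_neg,
    Real.sqrt_eq_rpow, ofReal_cpow ht, mul_one_div, ← div_mul_eq_mul_div, exp_pi_div_two_mul_I]
  norm_num

lemma norm_cpow_half (w : ℂ) : ‖w ^ ((1 : ℂ) / 2)‖ = √‖w‖ := by
  rw [Real.sqrt_eq_rpow, ← norm_cpow_real]
  norm_num

lemma cos_le_re_cosh {ζ : ℂ} {a : ℝ} (ha : a ≤ π / 2) (hζ : ‖ζ‖ ≤ a) :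
    Real.cos a ≤ (cosh ζ).re := by
  have hcos_a : 0 ≤ Real.cos a :=
    Real.cos_nonneg_of_mem_Icc ⟨by linarith [norm_nonneg ζ, pi_pos], ha⟩
  have hcos_im : Real.cos a ≤ Real.cos ζ.im := by
    rw [← Real.cos_abs ζ.im]
    exact Real.cos_le_cos_of_nonneg_of_le_pi (abs_nonneg _) (by linarith [pi_pos])
      ((abs_im_le_norm ζ).trans hζ)
  rw [cosh_re]
  nlinarith [Real.one_le_cosh ζ.re]

end Complex

lemma norm_one_sub_one_sub_sq_sq_le (z : ℂ) :
    ‖1 - (1 - z ^ 2) ^ 2‖ ≤ 2 * ‖z‖ ^ 2 + ‖z‖ ^ 4 := by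
  have h : ‖2 - z ^ 2‖ ≤ 2 + ‖z‖ ^ 2 :=
    (norm_sub_le _ _).trans_eq (by rw [norm_pow]; norm_num)
  calc ‖1 - (1 - z ^ 2) ^ 2‖ = ‖z‖ ^ 2 * ‖2 - z ^ 2‖ := by
        rw [show 1 - (1 - z ^ 2) ^ 2 = z ^ 2 * (2 - z ^ 2) by ring, norm_mul, norm_pow]
    _ ≤ ‖z‖ ^ 2 * (2 + ‖z‖ ^ 2) := by gcongr
    _ = 2 * ‖z‖ ^ 2 + ‖z‖ ^ 4 := by ring

lemma one_sub_one_sub_sq_sq_ofReal_mul_I (r : ℝ) :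
    1 - (1 - (r * I) ^ 2) ^ 2 = -((2 * r ^ 2 + r ^ 4 : ℝ) : ℂ) := by
  rw [mul_pow, I_sq]
  push_cast
  ring

lemma two_pi_mul_sqrt_le_pi_div_two {r : ℝ} (hr0 : 0 ≤ r) (hr1 : r ≤ 1) :
    2 * π * √(1 / 54) * √(2 * r ^ 2 + r ^ 4) ≤ π / 2 := by
  have hr2 : r ^ 2 ≤ 1 := pow_le_one₀ hr0 hr1
  have h : √(1 / 54) * √(2 * r ^ 2 + r ^ 4) ≤ 1 / 4 := by
    rw [← Real.sqrt_mul (by norm_num), Real.sqrt_le_left (by norm_num)]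
    nlinarith
  nlinarith [pi_pos]

noncomputable def coshTerm (z : ℂ) : ℂ :=
  Complex.cos (Real.pi / 3) +
    Complex.cosh (2 * Real.pi * Real.sqrt (1 / 54) * (1 - (1 - z ^ 2) ^ 2) ^ ((1 : ℂ) / 2))

lemma re_coshTerm (z : ℂ) :
    (coshTerm z).re = 1 / 2 + (Complex.cosh (2 * Real.pi * Real.sqrt (1 / 54) *
      (1 - (1 - z ^ 2) ^ 2) ^ ((1 : ℂ) / 2))).re := by
  rw [coshTerm, add_re, ← ofReal_ofNat, ← ofReal_div, ← ofReal_cos, ofReal_re,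
    Real.cos_pi_div_three]

lemma coshTerm_ofReal_mul_I (r : ℝ) :
    coshTerm (r * I) =
      ((1 / 2 + Real.cos (2 * π * √(1 / 54) * √(2 * r ^ 2 + r ^ 4)) : ℝ) : ℂ) := by
  rw [coshTerm, one_sub_one_sub_sq_sq_ofReal_mul_I, ofReal_neg_cpow_half (by positivity),
    ← mul_assoc, cosh_mul_I]
  push_cast
  rw [← ofReal_ofNat, ← ofReal_div, ← ofReal_cos, Real.cos_pi_div_three]
  push_cast
  ring_nf

noncomputable def coshTermMin (r : ℝ) : ℝ :=
  1 / 2 + Real.cos (2 * π * √(1 / 54) * √(2 * r ^ 2 + r ^ 4))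

lemma coshTermMin_pos {r : ℝ} (hr0 : 0 ≤ r) (hr1 : r ≤ 1) : 0 < coshTermMin r := by
  have := Real.cos_nonneg_of_mem_Icc
    ⟨by linarith [pi_pos, show 0 ≤ 2 * π * √(1 / 54) * √(2 * r ^ 2 + r ^ 4) by positivity],
      two_pi_mul_sqrt_le_pi_div_two hr0 hr1⟩
  rw [coshTermMin]
  linarith

lemma coshTermMin_le_norm_coshTerm {r : ℝ} (hr0 : 0 ≤ r) (hr1 : r ≤ 1) {z : ℂ} (hz : ‖z‖ = r) :
    coshTermMin r ≤ ‖coshTerm z‖ := by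
  have hζ : ‖2 * Real.pi * Real.sqrt (1 / 54) * (1 - (1 - z ^ 2) ^ 2) ^ ((1 : ℂ) / 2)‖ ≤
      2 * π * √(1 / 54) * √(2 * r ^ 2 + r ^ 4) := by
    have hc : ‖(2 * Real.pi * Real.sqrt (1 / 54) : ℂ)‖ = 2 * π * √(1 / 54) := by
      norm_cast
      exact Real.norm_of_nonneg (by positivity)
    rw [norm_mul, hc, norm_cpow_half, ← hz]
    gcongr
    exact norm_one_sub_one_sub_sq_sq_le z
  calc coshTermMin r ≤ (coshTerm z).re := by
        rw [re_coshTerm, coshTermMin]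
        gcongr
        exact cos_le_re_cosh (two_pi_mul_sqrt_le_pi_div_two hr0 hr1) hζ
    _ ≤ ‖coshTerm z‖ := re_le_norm _

lemma isLeast_norm_coshTerm {r : ℝ} (hr0 : 0 ≤ r) (hr1 : r ≤ 1) :
    IsLeast {y : ℝ | ∃ z : ℂ, ‖z‖ = r ∧ y = ‖coshTerm z‖} (coshTermMin r) := by
  refine ⟨⟨r * I, by simp [hr0], ?_⟩,
    fun y ⟨z, hz, hy⟩ => hy ▸ coshTermMin_le_norm_coshTerm hr0 hr1 hz⟩
  rw [coshTerm_ofReal_mul_I, ← coshTermMin, norm_real,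
    Real.norm_of_nonneg (coshTermMin_pos hr0 hr1).le]

lemma coshTermMin_eq (r : ℝ) :
    Real.cos (Real.pi / 3) + Real.cos (2 * Real.pi / Real.sqrt 54 *
      Real.sqrt (1 / 2 * (Real.sqrt (4 * r ^ 4 + 4 * r ^ 6 + r ^ 8) + 2 * r ^ 2 + r ^ 4))) =
      coshTermMin r := by
  have hsq : Real.sqrt (4 * r ^ 4 + 4 * r ^ 6 + r ^ 8) = 2 * r ^ 2 + r ^ 4 := by
    rw [show 4 * r ^ 4 + 4 * r ^ 6 + r ^ 8 = (2 * r ^ 2 + r ^ 4) ^ 2 by ring]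
    exact Real.sqrt_sq (by positivity)
  rw [coshTermMin, Real.cos_pi_div_three, hsq, one_div 54, Real.sqrt_inv, ← div_eq_mul_inv]
  ring_nf

theorem inf_abs_cosh_term (r : ℝ) (hr0 : 0 ≤ r) (hr1 : r ≤ 1) :
    (sInf {y : ℝ | ∃ z : ℂ, ‖z‖ = r ∧
        y = ‖(Complex.cos (Real.pi / 3) +
          Complex.cosh (2 * Real.pi * Real.sqrt (1 / 54) *
            (1 - (1 - z ^ 2) ^ 2) ^ ((1 : ℂ) / 2)))‖} =
      Real.cos (Real.pi / 3) +
        Real.cos (2 * Real.pi / Real.sqrt 54 *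
          Real.sqrt (1 / 2 * (Real.sqrt (4 * r ^ 4 + 4 * r ^ 6 + r ^ 8) + 2 * r ^ 2 + r ^ 4)))) ∧
    (r < 1 →
      0 < sInf {y : ℝ | ∃ z : ℂ, ‖z‖ = r ∧
        y = ‖(Complex.cos (Real.pi / 3) +
          Complex.cosh (2 * Real.pi * Real.sqrt (1 / 54) *
            (1 - (1 - z ^ 2) ^ 2) ^ ((1 : ℂ) / 2)))‖}) := by
  have h := (isLeast_norm_coshTerm hr0 hr1).csInf_eq
  exact ⟨h.trans (coshTermMin_eq r).symm, fun _ => (coshTermMin_pos hr0 hr1).trans_eq h.symm⟩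
end

section
/- For all real n ≥ 10, (2π/3)(√(n+1) + √(n−1) − 2√n) = −π/(6n^{3/2}) + E(n) where |E(n)| ≤ 625π√(5/2)/(13122·n^{7/2}). -/
set_option maxHeartbeats 4000000


open Real

private lemma sqrt_sum_aux (p n a b c s : ℝ) (hn : 10 ≤ n) (hp : 0 < p)
    (ha0 : 0 ≤ a) (hb0 : 0 ≤ b) (hc0 : 0 ≤ c) (hs0 : 0 ≤ s)
    (ha2 : a ^ 2 = n + 1) (hb2 : b ^ 2 = n - 1) (hc2 : c ^ 2 = n)
    (hs2 : s ^ 2 = 5 / 2) :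
    |2 * p / 3 * (a + b - 2 * c) + p / (6 * c ^ 3)| ≤ 625 * p * s / (13122 * c ^ 7) := by
  have hcpos : 0 < c := by nlinarith [hc2, hc0]
  have hcne : c ≠ 0 := ne_of_gt hcpos
  have hc3 : 3 ≤ c := by nlinarith [hc2, hc0]
  have hs158 : 158 / 100 ≤ s := by nlinarith [hs2, hs0]
  have hca : c ≤ a := by nlinarith [ha2, hc2, ha0, hc0]
  have hb94 : 94 / 100 * c ≤ b := by
    nlinarith [hb2, hc2, hb0, hc0, (show (0:ℝ) ≤ 94/100*c + b by linarith)]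
  have hab2 : (a * b) ^ 2 = n ^ 2 - 1 := by rw [mul_pow, ha2, hb2]; ring
  have hab0 : 0 ≤ a * b := mul_nonneg ha0 hb0
  have hc4 : c ^ 4 = n ^ 2 := by rw [show c^4 = (c^2)^2 by ring, hc2]
  have habu : a * b ≤ c ^ 2 := by
    nlinarith [hab2, hc4, hab0, (show (0:ℝ) ≤ a*b + c^2 by positivity)]
  have habl : 94 / 100 * c ^ 2 ≤ a * b := by
    nlinarith [mul_le_mul hca hb94 (by positivity) (le_trans hc0 hca)]
  obtain ⟨Q, hQdef⟩ : ∃ q : ℝ, q = (a + b + 2 * c) * (a * b + c ^ 2) := ⟨_, rfl⟩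
  have hQpos : 0 < Q := by
    rw [hQdef]
    exact mul_pos (by linarith) (by nlinarith [hab0, hcpos])
  have hQne : Q ≠ 0 := ne_of_gt hQpos
  have key : (a + b - 2 * c) * Q = -2 := by
    rw [hQdef]
    linear_combination (a*b + c^2) * ha2 + (a*b + c^2) * hb2 +
      (-2*n - 2*(a*b) - 4*c^2) * hc2 + 2 * hab2
  have hQl : 764 / 100 * c ^ 3 ≤ Q := by
    have hf1 : 394/100 * c ≤ a + b + 2*c := by linarith
    have hf2 : 194/100 * c^2 ≤ a*b + c^2 := by linarith
    have h := mul_le_mul hf1 hf2 (by positivity) (by linarith : (0:ℝ) ≤ a + b + 2*c)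
    rw [← hQdef] at h
    nlinarith [h, pow_nonneg hc0 3]
  obtain ⟨d, hd_def⟩ : ∃ x : ℝ, x = c ^ 2 - a * b := ⟨_, rfl⟩
  obtain ⟨e, he_def⟩ : ∃ x : ℝ, x = 2 * c - a - b := ⟨_, rfl⟩
  have hd_pos : 0 ≤ d := by rw [hd_def]; linarith
  have hd1 : d * (c ^ 2 + a * b) = 1 := by
    rw [hd_def]; linear_combination (c^2 + n) * hc2 - hab2
  have he_pos : 0 ≤ e := by
    rw [he_def]
    nlinarith [habu, ha2, hb2, hc2, (show (0:ℝ) < a + b + 2*c by linarith)]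
  have heQ : e * Q = 2 := by rw [he_def]; linear_combination -key
  have hd_up : 4 * c ^ 2 * d ≤ 200 / 97 := by
    have h1 : d * (194/100 * c^2) ≤ d * (c^2 + a*b) :=
      mul_le_mul_of_nonneg_left (by linarith) hd_pos
    rw [hd1] at h1
    nlinarith [h1]
  have he_up : 2 * c ^ 3 * e ≤ 100 / 191 := by
    have h1 : e * (764/100 * c^3) ≤ e * Q := mul_le_mul_of_nonneg_left hQl he_pos
    rw [heQ] at h1
    nlinarith [h1]
  have hc27 : 27 ≤ c ^ 3 := by nlinarith [hc3]
  have he_small : e ≤ 1 := by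
    nlinarith [he_up, mul_nonneg he_pos (show (0:ℝ) ≤ 2*c^3 - 54 by linarith)]
  have hid0 : 8 * c ^ 3 - Q = 4 * c * d + 2 * c ^ 2 * e - e * d := by
    rw [hQdef, hd_def, he_def]; ring
  have hQu : Q ≤ 8 * c ^ 3 := by
    nlinarith [hid0, mul_nonneg hd_pos (show (0:ℝ) ≤ 4*c - e by linarith),
      mul_nonneg (sq_nonneg c) he_pos]
  have hgap : c * (8 * c ^ 3 - Q) ≤ 13 / 5 := by
    have hidc : c * (8*c^3 - Q) = 4*c^2*d + 2*c^3*e - c*(e*d) := by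
      rw [hQdef, hd_def, he_def]; ring
    nlinarith [hidc, hd_up, he_up, mul_nonneg (mul_nonneg hc0 he_pos) hd_pos]
  have hmain : 2187 * c ^ 4 * (8 * c ^ 3 - Q) ≤ 625 * s * Q := by
    have t1 : 2187 * c^3 * (c * (8*c^3 - Q)) ≤ 2187 * c^3 * (13/5) :=
      mul_le_mul_of_nonneg_left hgap (by positivity)
    have t2 : 625 * (158/100) * (764/100 * c^3) ≤ 625 * s * Q := by
      nlinarith [mul_nonneg (show (0:ℝ) ≤ s - 158/100 by linarith) hQpos.le,
        mul_nonneg (show (0:ℝ) ≤ 158/100 by norm_num) (show (0:ℝ) ≤ Q - 764/100*c^3 by linarith)]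
    nlinarith [t1, t2, pow_nonneg hc0 3]
  have hA : a + b - 2 * c = -2 / Q := by
    field_simp
    linarith [key]
  rw [hA]
  have hEeq : 2 * p / 3 * (-2 / Q) + p / (6 * c ^ 3) =
      -(p * (8 * c ^ 3 - Q) / (6 * (Q * c ^ 3))) := by
    field_simp
    ring
  rw [hEeq, abs_neg, abs_of_nonneg (div_nonneg
    (mul_nonneg hp.le (by linarith)) (by positivity))]
  rw [div_le_div_iff₀ (by positivity) (by positivity)]
  nlinarith [mul_le_mul_of_nonneg_left hmain (show (0:ℝ) ≤ 6 * p * c^3 by positivity)]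

theorem sqrt_sum_expansion (n : ℝ) (hn : 10 ≤ n) :
    ∃ E : ℝ, 2 * Real.pi / 3 * (Real.sqrt (n + 1) + Real.sqrt (n - 1) - 2 * Real.sqrt n) =
        -(Real.pi / (6 * n ^ ((3 : ℝ) / 2))) + E ∧
      |E| ≤ 625 * Real.pi * Real.sqrt (5 / 2) / (13122 * n ^ ((7 : ℝ) / 2)) := by
  have hn0 : (0:ℝ) ≤ n := by linarith
  have h32 : n ^ ((3:ℝ)/2) = Real.sqrt n ^ 3 := by
    rw [show ((3:ℝ)/2) = (1/2) * 3 by norm_num, Real.rpow_mul hn0, ← Real.sqrt_eq_rpow,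
      show (3:ℝ) = ((3:ℕ):ℝ) by norm_num, Real.rpow_natCast]
  have h72 : n ^ ((7:ℝ)/2) = Real.sqrt n ^ 7 := by
    rw [show ((7:ℝ)/2) = (1/2) * 7 by norm_num, Real.rpow_mul hn0, ← Real.sqrt_eq_rpow,
      show (7:ℝ) = ((7:ℕ):ℝ) by norm_num, Real.rpow_natCast]
  rw [h32, h72]
  refine ⟨2 * Real.pi / 3 * (Real.sqrt (n + 1) + Real.sqrt (n - 1) - 2 * Real.sqrt n) +
    Real.pi / (6 * Real.sqrt n ^ 3), by ring, ?_⟩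
  exact sqrt_sum_aux Real.pi n _ _ _ _ hn Real.pi_pos (Real.sqrt_nonneg _) (Real.sqrt_nonneg _)
    (Real.sqrt_nonneg _) (Real.sqrt_nonneg _) (Real.sq_sqrt (by linarith))
    (Real.sq_sqrt (by linarith)) (Real.sq_sqrt hn0) (Real.sq_sqrt (by norm_num))
end
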